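/- Let L_c : ℝ^d → ℝ be convex and β-smooth, let g₁, g₂ ∈ ℝ^d with ‖g₁‖, ‖g₂‖ ≤ G, and suppose L_c(w - η g₁) ≤ L_c(w - η g₂) for some η > 0. Then ⟨g₁, ∇L_c(w)⟩ ≥ ⟨g₂, ∇L_c(w)⟩ - βG²η. -/

import Mathlib

/-!
Convexity bounds `L(w - η g₁)` below by `L(w) - η ⟪g₁, ∇L(w)⟫`, and `β`-Lipschitz continuity of
the gradient bounds `L(w - η g₂)` above by `L(w) - η ⟪g₂, ∇L(w)⟫ + β η² ‖g₂‖²`. Chaining the two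
through `L(w - η g₁) ≤ L(w - η g₂)` and dividing by `η` gives the claim.
-/

open scoped RealInnerProductSpace

open Set

section FirstOrderBounds

variable {E : Type*} [NormedAddCommGroup E] [NormedSpace ℝ E] {f : E → ℝ}

theorem ConvexOn.add_fderiv_sub_le {s : Set E} {f' : E →L[ℝ] ℝ} {x y : E}
    (hf : ConvexOn ℝ s f) (hx : x ∈ s) (hy : y ∈ s) (hf' : HasFDerivAt f f' x) :
    f x + f' (y - x) ≤ f y := by
  let ℓ := AffineMap.lineMap (k := ℝ) x y
  have hconv : ConvexOn ℝ (ℓ ⁻¹' s) (f ∘ ℓ) := hf.comp_affineMap ℓ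
  have hderiv : HasDerivAt (f ∘ ℓ) (f' (y - x)) 0 := by
    simpa [ℓ] using hf'.comp_hasDerivAt_of_eq (x := (0 : ℝ)) AffineMap.hasDerivAt_lineMap
      (AffineMap.lineMap_apply_zero x y).symm
  have hslope := hconv.le_slope_of_hasDerivAt (by simpa [ℓ] using hx) (by simpa [ℓ] using hy)
    zero_lt_one hderiv
  simp only [slope, sub_zero, inv_one, one_smul, Function.comp_apply, ℓ,
    AffineMap.lineMap_apply_zero, AffineMap.lineMap_apply_one, vsub_eq_sub] at hslope
  linarith

/-- The mean value inequality for `f - f' x` on `closedBall x ‖y - x‖`, where `f'` stays within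
`β ‖y - x‖` of `f' x`. -/
theorem le_add_fderiv_sub_add_mul_norm_sq {f' : E → E →L[ℝ] ℝ} {β : ℝ} (hβ : 0 ≤ β)
    (hf : ∀ x, HasFDerivAt f (f' x) x) (hlip : ∀ x y, ‖f' x - f' y‖ ≤ β * ‖x - y‖) (x y : E) :
    f y ≤ f x + f' x (y - x) + β * ‖y - x‖ ^ 2 := by
  have hbound : ∀ z ∈ Metric.closedBall x ‖y - x‖, ‖f' z - f' x‖ ≤ β * ‖y - x‖ := by
    intro z hz
    rw [mem_closedBall_iff_norm] at hz
    exact (hlip z x).trans (mul_le_mul_of_nonneg_left hz hβ)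
  have hmvt := (convex_closedBall x ‖y - x‖).norm_image_sub_le_of_norm_hasFDerivWithin_le'
    (fun z _ => (hf z).hasFDerivWithinAt) hbound
    (Metric.mem_closedBall_self (norm_nonneg _)) (mem_closedBall_iff_norm.mpr le_rfl)
  have hupper : f y - f x - f' x (y - x) ≤ β * ‖y - x‖ * ‖y - x‖ :=
    (Real.le_norm_self _).trans hmvt
  nlinarith

end FirstOrderBounds

theorem holdout_comparison_general {d : ℕ}
    (Lc : EuclideanSpace ℝ (Fin d) → ℝ)
    (gradLc : EuclideanSpace ℝ (Fin d) → EuclideanSpace ℝ (Fin d))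
    (β G : ℝ) (hβ : 0 ≤ β)
    (hconv : ConvexOn ℝ Set.univ Lc)
    (hgrad : ∀ x, HasGradientAt Lc (gradLc x) x)
    (hlip : ∀ x y, ‖gradLc x - gradLc y‖ ≤ β * ‖x - y‖)
    (g₁ g₂ : EuclideanSpace ℝ (Fin d)) (hg₂ : ‖g₂‖ ≤ G)
    (w : EuclideanSpace ℝ (Fin d)) (η : ℝ) (hη : 0 < η)
    (hle : Lc (w - η • g₁) ≤ Lc (w - η • g₂)) :
    ⟪g₁, gradLc w⟫ ≥ ⟪g₂, gradLc w⟫ - β * G ^ 2 * η := by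
  let D := InnerProductSpace.toDual ℝ (EuclideanSpace ℝ (Fin d))
  have hderiv (x) : HasFDerivAt Lc (D (gradLc x)) x := (hgrad x).hasFDerivAt
  have hDlip (x y) : ‖D (gradLc x) - D (gradLc y)‖ ≤ β * ‖x - y‖ := by
    rw [← map_sub, LinearIsometryEquiv.norm_map]
    exact hlip x y
  have lower := hconv.add_fderiv_sub_le (mem_univ w) (mem_univ (w - η • g₁)) (hderiv w)
  have upper := le_add_fderiv_sub_add_mul_norm_sq hβ hderiv hDlip w (w - η • g₂)
  simp only [sub_sub_cancel_left, map_neg, map_smul, smul_eq_mul, D,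
    InnerProductSpace.toDual_apply_apply, norm_neg, norm_smul, Real.norm_eq_abs,
    abs_of_pos hη, real_inner_comm g₁, real_inner_comm g₂] at lower upper
  have hquad : β * (η * ‖g₂‖) ^ 2 ≤ η * (β * G ^ 2 * η) := by
    have hsq := pow_le_pow_left₀ (norm_nonneg _) hg₂ 2
    rw [mul_pow]
    nlinarith [mul_le_mul_of_nonneg_left hsq (by positivity : 0 ≤ β * η ^ 2)]
  have key : η * ⟪g₂, gradLc w⟫ ≤ η * (⟪g₁, gradLc w⟫ + β * G ^ 2 * η) := by
    linarith
  linarith [le_of_mul_le_mul_left key hη]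

/-- If `g₁` achieves smaller post-step loss than `g₂`, its inner product with the
holdout gradient is nearly as large: ⟨g₁,∇L_c(w)⟩ ≥ ⟨g₂,∇L_c(w)⟩ - βG²η. -/
theorem holdout_comparison {d : ℕ}
    (Lc : EuclideanSpace ℝ (Fin d) → ℝ)
    (gradLc : EuclideanSpace ℝ (Fin d) → EuclideanSpace ℝ (Fin d))
    (β G : ℝ) (hβ : 0 ≤ β) (hG : 0 ≤ G)
    (hconv : ConvexOn ℝ Set.univ Lc)
    (hgrad : ∀ x, HasGradientAt Lc (gradLc x) x)
    (hlip : ∀ x y, ‖gradLc x - gradLc y‖ ≤ β * ‖x - y‖)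
    (g₁ g₂ : EuclideanSpace ℝ (Fin d)) (hg₁ : ‖g₁‖ ≤ G) (hg₂ : ‖g₂‖ ≤ G)
    (w : EuclideanSpace ℝ (Fin d)) (η : ℝ) (hη : 0 < η)
    (hle : Lc (w - η • g₁) ≤ Lc (w - η • g₂)) :
    ⟪g₁, gradLc w⟫ ≥ ⟪g₂, gradLc w⟫ - β * G ^ 2 * η :=
  holdout_comparison_general Lc gradLc β G hβ hconv hgrad hlip g₁ g₂ hg₂ w η hη hle
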